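/- Let B be a ring and S a multiplicatively closed subset. Then S is a right Ore set in B (i.e. for all b ∈ B, s ∈ S: bS ∩ sB ≠ ∅, and sb = 0 implies bt = 0 for some t ∈ S) if and only if the category 𝒮 is filtered and the module of right fractions B|S is S-local (every s ∈ S acts invertibly on B|S by left multiplication). -/

import Mathlib

/-! In the category `𝒮` the relation `x|sx = 1|s` identifies the fraction `b|s` with
`bx|sx`, so `B|S` is the colimit over `𝒮` of copies of `B`. When `𝒮` is filtered,
this colimit is computed as in sets: `b|u = 0` exactly when `bz = 0` for some `z` with
`uz ∈ S`. For this, every element of the relation submodule, written over any common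
denominator `u`, has its numerator killed by such a `z`: the generators satisfy this
because parallel morphisms are coequalized, and the property survives sums and scalars
because common denominators can always be refined. With this description of zero,
bijectivity of `s • ·` on single fractions `c|u` translates directly into the two Ore
conditions. -/

/-- The submodule of relations defining the module of right fractions. -/
noncomputable def fracRel (B : Type) [Ring B] (S : Set B) : Submodule B (↥S →₀ B) :=
  Submodule.span B { v | ∃ (s x : B) (hs : s ∈ S) (hsx : s * x ∈ S),
    v = Finsupp.single ⟨s * x, hsx⟩ x - Finsupp.single ⟨s, hs⟩ 1 }

/-- The left `B`-module `B|S` of right fractions with denominators in `S`. -/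
abbrev Frac (B : Type) [Ring B] (S : Set B) : Type :=
  (↥S →₀ B) ⧸ fracRel B S

/-- The fraction `b|s`. -/
noncomputable def fracElt (B : Type) [Ring B] (S : Set B) (b s : B) (hs : s ∈ S) :
    Frac B S :=
  Submodule.Quotient.mk (Finsupp.single ⟨s, hs⟩ b)

/-- A left `B`-module is `S`-local if every `s ∈ S` acts invertibly by left
multiplication. -/
def SLocal (B : Type) [Ring B] (S : Set B) (N : Type) [AddCommGroup N] [Module B N] :
    Prop :=
  ∀ s ∈ S, Function.Bijective (fun n : N => s • n)

variable {B : Type} [Ring B] {S : Set B}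

/- The two conditions saying that the category `𝒮` is filtered: two objects map to a
common object, and two parallel morphisms `x y : s → sx = sy` are coequalized. -/
def HasCommonMultiples (S : Set B) : Prop :=
  ∀ s ∈ S, ∀ t ∈ S, ∃ x y : B, s * x = t * y ∧ s * x ∈ S

def CoequalizesParallel (S : Set B) : Prop :=
  ∀ s ∈ S, ∀ x y : B, s * x = s * y → s * x ∈ S → ∃ z : B, x * z = y * z ∧ s * x * z ∈ S

noncomputable def fracSingle (S : Set B) (u : S) : B →ₗ[B] Frac B S :=
  (fracRel B S).mkQ ∘ₗ Finsupp.lsingle u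

theorem fracSingle_apply (b u : B) (hu : u ∈ S) :
    fracSingle S ⟨u, hu⟩ b = fracElt B S b u hu := rfl

theorem fracElt_add (b c u : B) (hu : u ∈ S) :
    fracElt B S b u hu + fracElt B S c u hu = fracElt B S (b + c) u hu := by
  simp only [← fracSingle_apply, map_add]

theorem fracElt_sub (b c u : B) (hu : u ∈ S) :
    fracElt B S b u hu - fracElt B S c u hu = fracElt B S (b - c) u hu := by
  simp only [← fracSingle_apply, map_sub]

theorem fracElt_smul (b c u : B) (hu : u ∈ S) :
    b • fracElt B S c u hu = fracElt B S (b * c) u hu := by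
  rw [← fracSingle_apply, ← fracSingle_apply, ← smul_eq_mul, map_smul]

theorem fracElt_zero (u : B) (hu : u ∈ S) : fracElt B S 0 u hu = 0 := by
  simp only [← fracSingle_apply, map_zero]

theorem fracElt_eq_of_mul_eq (b : B) {s x t : B} (hs : s ∈ S) (ht : t ∈ S) (h : s * x = t) :
    fracElt B S b s hs = fracElt B S (b * x) t ht := by
  subst h
  have hrel : fracElt B S x (s * x) ht = fracElt B S 1 s hs :=
    (Submodule.Quotient.eq _).2 (Submodule.subset_span ⟨s, x, hs, ht, rfl⟩)
  calc fracElt B S b s hs = b • fracElt B S 1 s hs := by rw [fracElt_smul, mul_one]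
    _ = fracElt B S (b * x) (s * x) ht := by rw [← hrel, fracElt_smul]

theorem exists_eq_fracElt (h1 : (1 : B) ∈ S) (hS : HasCommonMultiples S) (m : Frac B S) :
    ∃ (c u : B) (hu : u ∈ S), m = fracElt B S c u hu := by
  obtain ⟨v, rfl⟩ := Submodule.Quotient.mk_surjective _ m
  induction v using Finsupp.induction with
  | zero => exact ⟨0, 1, h1, (fracElt_zero 1 h1).symm⟩
  | single_add a c' w _ _ ih =>
    obtain ⟨c, u, hu, hw⟩ := ih
    obtain ⟨x, y, hxy, hax⟩ := hS a a.2 u hu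
    refine ⟨c' * x + c * y, a * x, hax, ?_⟩
    rw [Submodule.Quotient.mk_add, hw, fracElt_eq_of_mul_eq c hu hax hxy.symm, ← fracElt_add]
    exact congrArg (· + _) (fracElt_eq_of_mul_eq c' a.2 hax rfl)

theorem exists_common_multiple_finset (hS : HasCommonMultiples S) (T : Finset S) {u : B}
    (hu : u ∈ S) : ∃ (q : B) (f : S → B), u * q ∈ S ∧ ∀ s ∈ T, (s : B) * f s = u * q := by
  classical
  induction T using Finset.induction_on with
  | empty => exact ⟨1, fun _ => 0, by simpa using hu, by simp⟩
  | @insert a T ha ih =>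
    obtain ⟨q, f, hq, hf⟩ := ih
    obtain ⟨x, y, hxy, hax⟩ := hS a a.2 (u * q) hq
    refine ⟨q * y, fun t => if t = a then x else f t * y, by rwa [← mul_assoc, ← hxy], ?_⟩
    intro t ht
    dsimp only
    rcases Finset.mem_insert.mp ht with rfl | htT
    · rw [if_pos rfl, hxy, mul_assoc]
    · rw [if_neg (by rintro rfl; exact ha htT), ← mul_assoc, hf t htT, mul_assoc]

theorem exists_extend_commonDenom (hS : HasCommonMultiples S) (T R : Finset S) {u : B}
    (hu : u ∈ S) {f₀ : S → B} (hf₀ : ∀ s ∈ R, (s : B) * f₀ s = u) :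
    ∃ (q : B) (f : S → B), u * q ∈ S ∧ (∀ s ∈ T, (s : B) * f s = u * q) ∧
      ∀ s ∈ R, f s = f₀ s * q := by
  classical
  obtain ⟨q, f₁, hq, hf₁⟩ := exists_common_multiple_finset hS T hu
  refine ⟨q, fun s => if s ∈ R then f₀ s * q else f₁ s, hq, fun s hs => ?_,
    fun s hs => if_pos hs⟩
  dsimp only
  split_ifs with h
  · rw [← mul_assoc, hf₀ s h]
  · exact hf₁ s hs

/-- If `s * f s = u` for all `s` in the support of `v`, then `∑ v s | s` equals
`fracNum v f | u`. -/
def fracNum (v : S →₀ B) (f : S → B) : B :=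
  v.sum fun s c => c * f s

theorem fracNum_eq_mul {v : S →₀ B} {f f₀ : S → B} {q : B}
    (h : ∀ s ∈ v.support, f s = f₀ s * q) : fracNum v f = fracNum v f₀ * q := by
  rw [fracNum, fracNum, Finsupp.sum_mul]
  exact Finset.sum_congr rfl fun s hs => by simp only [h s hs, mul_assoc]

/-- `v` vanishes in the filtered colimit: over every common denominator, the numerator
is killed by a morphism of `𝒮`. -/
def FracVanishes (S : Set B) (v : S →₀ B) : Prop :=
  ∀ u ∈ S, ∀ f : S → B, (∀ s ∈ v.support, (s : B) * f s = u) →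
    ∃ z : B, u * z ∈ S ∧ fracNum v f * z = 0

theorem fracVanishes_zero : FracVanishes S 0 :=
  fun u hu f _ => ⟨1, by rwa [mul_one], by simp [fracNum]⟩

theorem FracVanishes.add (hS : HasCommonMultiples S) {v w : S →₀ B} (hv : FracVanishes S v)
    (hw : FracVanishes S w) : FracVanishes S (v + w) := by
  classical
  intro u hu f₀ hf₀
  obtain ⟨q, f, hq, hfT, hfR⟩ :=
    exists_extend_commonDenom hS (v.support ∪ w.support) _ hu hf₀
  have hsplit : fracNum (v + w) f = fracNum v f + fracNum w f :=
    Finsupp.sum_add_index' (fun _ => zero_mul _) fun _ _ _ => add_mul _ _ _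
  obtain ⟨z₁, hz₁S, hz₁⟩ :=
    hv (u * q) hq f fun s hs => hfT s (Finset.mem_union_left _ hs)
  obtain ⟨z₂, hz₂S, hz₂⟩ := hw (u * q * z₁) hz₁S (fun s => f s * z₁)
    fun s hs => by rw [← mul_assoc, hfT s (Finset.mem_union_right _ hs)]
  refine ⟨q * (z₁ * z₂), by simpa only [mul_assoc] using hz₂S, ?_⟩
  rw [← mul_assoc, ← mul_assoc, ← fracNum_eq_mul hfR, hsplit, add_mul, add_mul, hz₁,
    zero_mul, zero_add, ← fracNum_eq_mul fun _ _ => rfl, hz₂]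

theorem FracVanishes.smul (hS : HasCommonMultiples S) (b : B) {v : S →₀ B}
    (hv : FracVanishes S v) : FracVanishes S (b • v) := by
  intro u hu f₀ hf₀
  obtain ⟨q, f, hq, hfT, hfR⟩ := exists_extend_commonDenom hS v.support _ hu hf₀
  have hnum : fracNum (b • v) f = b * fracNum v f := by
    rw [fracNum, fracNum, Finsupp.sum_smul_index fun _ => zero_mul _, Finsupp.mul_sum]
    simp only [mul_assoc]
  obtain ⟨z, hzS, hz⟩ := hv (u * q) hq f hfT
  refine ⟨q * z, by rwa [← mul_assoc], ?_⟩
  rw [← mul_assoc, ← fracNum_eq_mul hfR, hnum, mul_assoc, hz, mul_zero]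

theorem fracVanishes_relation (hS : HasCommonMultiples S) (hC : CoequalizesParallel S)
    {s x : B} (hs : s ∈ S) (hsx : s * x ∈ S) :
    FracVanishes S (Finsupp.single ⟨s * x, hsx⟩ x - Finsupp.single ⟨s, hs⟩ 1) := by
  classical
  intro u hu f₀ hf₀
  obtain ⟨q, f, hq, hfT, hfR⟩ :=
    exists_extend_commonDenom hS {⟨s * x, hsx⟩, ⟨s, hs⟩} _ hu hf₀
  have hnum : fracNum (Finsupp.single ⟨s * x, hsx⟩ x - Finsupp.single ⟨s, hs⟩ 1) f =
      x * f ⟨s * x, hsx⟩ - f ⟨s, hs⟩ := by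
    rw [fracNum, Finsupp.sum_sub_index fun _ _ _ => sub_mul _ _ _, Finsupp.sum_single_index
      (zero_mul _), Finsupp.sum_single_index (zero_mul _), one_mul]
  have hsx' : s * x * f ⟨s * x, hsx⟩ = u * q := hfT _ (Finset.mem_insert_self _ _)
  have hs' : s * f ⟨s, hs⟩ = u * q :=
    hfT _ (Finset.mem_insert_of_mem (Finset.mem_singleton_self _))
  obtain ⟨z, hz, hzS⟩ := hC s hs (x * f ⟨s * x, hsx⟩) (f ⟨s, hs⟩)
    (by rw [← mul_assoc, hsx', hs']) (by rwa [← mul_assoc, hsx'])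
  refine ⟨q * z, by rwa [← mul_assoc, ← hsx', mul_assoc s], ?_⟩
  rw [← mul_assoc, ← fracNum_eq_mul hfR, hnum, sub_mul, hz, sub_self]

theorem fracVanishes_of_mem_fracRel (hS : HasCommonMultiples S) (hC : CoequalizesParallel S)
    {v : S →₀ B} (hv : v ∈ fracRel B S) : FracVanishes S v := by
  induction hv using Submodule.span_induction with
  | mem g hg =>
    obtain ⟨s, x, hs, hsx, rfl⟩ := hg
    exact fracVanishes_relation hS hC hs hsx
  | zero => exact fracVanishes_zero
  | add v w _ _ hv hw => exact hv.add hS hw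
  | smul b v _ hv => exact hv.smul hS b

theorem fracElt_eq_zero_iff (hS : HasCommonMultiples S) (hC : CoequalizesParallel S)
    {d u : B} (hu : u ∈ S) : fracElt B S d u hu = 0 ↔ ∃ z : B, u * z ∈ S ∧ d * z = 0 := by
  constructor
  · intro h
    have hv := fracVanishes_of_mem_fracRel hS hC ((Submodule.Quotient.mk_eq_zero _).1 h)
    simpa [fracNum, Finsupp.sum_single_index] using
      hv u hu (fun _ => 1) fun s hs => by
        rw [Finset.mem_singleton.1 (Finsupp.support_single_subset hs), mul_one]
  · rintro ⟨z, hzS, hz⟩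
    rw [fracElt_eq_of_mul_eq d hu hzS rfl, hz, fracElt_zero]

theorem hasCommonMultiples_of_ore (hmul : ∀ s ∈ S, ∀ t ∈ S, s * t ∈ S)
    (hO1 : ∀ b : B, ∀ s ∈ S, ∃ u ∈ S, ∃ c : B, b * u = s * c) : HasCommonMultiples S := by
  intro s hs t ht
  obtain ⟨u, hu, c, hc⟩ := hO1 s t ht
  exact ⟨u, c, hc, hmul s hs u hu⟩

theorem coequalizesParallel_of_ore (hmul : ∀ s ∈ S, ∀ t ∈ S, s * t ∈ S)
    (hO2 : ∀ b : B, ∀ s ∈ S, s * b = 0 → ∃ t ∈ S, b * t = 0) : CoequalizesParallel S := by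
  intro s hs x y hxy hsx
  obtain ⟨t, ht, hxyt⟩ := hO2 (x - y) s hs (by rw [mul_sub, hxy, sub_self])
  rw [sub_mul, sub_eq_zero] at hxyt
  exact ⟨t, hxyt, hmul _ hsx t ht⟩

theorem sLocal_frac_of_ore (h1 : (1 : B) ∈ S) (hmul : ∀ s ∈ S, ∀ t ∈ S, s * t ∈ S)
    (hO1 : ∀ b : B, ∀ s ∈ S, ∃ u ∈ S, ∃ c : B, b * u = s * c)
    (hO2 : ∀ b : B, ∀ s ∈ S, s * b = 0 → ∃ t ∈ S, b * t = 0) : SLocal B S (Frac B S) := by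
  have hS := hasCommonMultiples_of_ore hmul hO1
  have hC := coequalizesParallel_of_ore hmul hO2
  intro s hs
  constructor
  · refine (injective_iff_map_eq_zero (DistribSMul.toAddMonoidHom (Frac B S) s)).2 ?_
    intro m hm
    obtain ⟨c, u, hu, rfl⟩ := exists_eq_fracElt h1 hS m
    rw [DistribSMul.toAddMonoidHom_apply, fracElt_smul, fracElt_eq_zero_iff hS hC] at hm
    obtain ⟨z, hzS, hz⟩ := hm
    obtain ⟨t, ht, hczt⟩ := hO2 (c * z) s hs (by rw [← mul_assoc, hz])
    refine (fracElt_eq_zero_iff hS hC hu).2 ⟨z * t, ?_, by rw [← mul_assoc, hczt]⟩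
    rw [← mul_assoc]
    exact hmul _ hzS t ht
  · intro m
    obtain ⟨c, t, ht, rfl⟩ := exists_eq_fracElt h1 hS m
    obtain ⟨u, hu, c', hc'⟩ := hO1 c s hs
    refine ⟨fracElt B S c' (t * u) (hmul t ht u hu), show s • _ = _ from ?_⟩
    rw [fracElt_smul, ← hc', ← fracElt_eq_of_mul_eq c ht _ rfl]

theorem ore_exists_of_sLocal_frac (h1 : (1 : B) ∈ S) (hS : HasCommonMultiples S)
    (hC : CoequalizesParallel S) (hloc : SLocal B S (Frac B S)) :
    ∀ b : B, ∀ s ∈ S, ∃ u ∈ S, ∃ c : B, b * u = s * c := by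
  intro b s hs
  obtain ⟨m, hm : s • m = _⟩ := (hloc s hs).2 (fracElt B S b 1 h1)
  obtain ⟨c, u, hu, rfl⟩ := exists_eq_fracElt h1 hS m
  have hzero : fracElt B S (s * c - b * u) u hu = 0 := by
    rw [← fracElt_sub, ← fracElt_smul, hm, fracElt_eq_of_mul_eq b h1 hu (one_mul u), sub_self]
  obtain ⟨z, hzS, hz⟩ := (fracElt_eq_zero_iff hS hC hu).1 hzero
  rw [sub_mul, sub_eq_zero] at hz
  exact ⟨u * z, hzS, c * z, by rw [← mul_assoc, ← mul_assoc, hz]⟩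

theorem ore_ann_of_sLocal_frac (h1 : (1 : B) ∈ S) (hS : HasCommonMultiples S)
    (hC : CoequalizesParallel S) (hloc : SLocal B S (Frac B S)) :
    ∀ b : B, ∀ s ∈ S, s * b = 0 → ∃ t ∈ S, b * t = 0 := by
  intro b s hs hsb
  have hb : fracElt B S b 1 h1 = 0 :=
    (hloc s hs).1 (by simp only [fracElt_smul, hsb, fracElt_zero, smul_zero])
  obtain ⟨z, hzS, hz⟩ := (fracElt_eq_zero_iff hS hC h1).1 hb
  exact ⟨z, by rwa [one_mul] at hzS, hz⟩

theorem statement3 (B : Type) [Ring B] (S : Set B)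
    (h1 : (1 : B) ∈ S) (hmul : ∀ s ∈ S, ∀ t ∈ S, s * t ∈ S) :
    -- S is a right Ore set:
    ((∀ b : B, ∀ s ∈ S, ∃ u ∈ S, ∃ c : B, b * u = s * c) ∧
      (∀ b : B, ∀ s ∈ S, s * b = 0 → ∃ t ∈ S, b * t = 0)) ↔
    -- iff 𝒮 is filtered and B|S is S-local:
    (((∀ s ∈ S, ∀ t ∈ S, ∃ x y : B, s * x = t * y ∧ s * x ∈ S) ∧
        (∀ s ∈ S, ∀ x y : B, s * x = s * y → s * x ∈ S →
          ∃ z : B, x * z = y * z ∧ s * x * z ∈ S)) ∧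
      SLocal B S (Frac B S)) := by
  constructor
  · rintro ⟨hO1, hO2⟩
    exact ⟨⟨hasCommonMultiples_of_ore hmul hO1, coequalizesParallel_of_ore hmul hO2⟩,
      sLocal_frac_of_ore h1 hmul hO1 hO2⟩
  · rintro ⟨⟨hS, hC⟩, hloc⟩
    exact ⟨ore_exists_of_sLocal_frac h1 hS hC hloc, ore_ann_of_sLocal_frac h1 hS hC hloc⟩
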